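/- arXiv:2508.03335 — 2 statements merged into one kernel-verified Lean document; each statement's English description precedes it below -/
import Mathlib

section
/- For all integers w ≥ 0 and p ≥ p_w + 1, γ(w,p) ≥ α(w,p) + 3. -/
open SimpleGraph

def Contains {V W : Type*} (U : SimpleGraph V) (G : SimpleGraph W) : Prop :=
  ∃ f : G →g U, Function.Injective f

def IsWSubtree {V : Type*} (F : SimpleGraph V) (W : Set V) (H : F.Subgraph) : Prop :=
  H.coe.IsTree ∧ (∀ w ∈ W, (H.neighborSet w).Subsingleton) ∧
    ∀ H' : F.Subgraph, H ≤ H' → H'.coe.IsTree →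
      (∀ w ∈ W, (H'.neighborSet w).Subsingleton) → H' = H

noncomputable def ratio (w : ℕ) : ℝ := (2 + (2/3 : ℝ) ^ w) / (1 + (2/3 : ℝ) ^ w)
noncomputable def alphaF (w p : ℕ) : ℝ := (1 / (1 + (2/3 : ℝ) ^ w)) * ratio w ^ (p - 1)
noncomputable def betaF (w : ℕ) : ℝ := 3 * (3/2 : ℝ) ^ w
noncomputable def gammaF (w p : ℕ) : ℝ := ratio w ^ p
noncomputable def deltaF (w : ℕ) : ℝ := (2 + (2/3 : ℝ) ^ w) * betaF w
noncomputable def pW (w : ℕ) : ℕ := sInf {p : ℕ | betaF w ≤ alphaF w (p + 1)}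

noncomputable def betaK (k w : ℕ) : ℝ := (2 * k + 4) * (3/2 : ℝ) ^ w
noncomputable def deltaK (k w : ℕ) : ℝ := (2 + (2/3 : ℝ) ^ w) * betaK k w
noncomputable def pWK (k w : ℕ) : ℕ := sInf {p : ℕ | betaK k w ≤ alphaF w (p + 1)}

def JVert (a b : ℕ) : ℕ → Type
  | 0 => Fin b
  | m + 1 => Fin a ⊕ (JVert a b m ⊕ JVert a b m)

def JGraph (a b : ℕ) : (m : ℕ) → SimpleGraph (JVert a b m)
  | 0 => ⊤
  | m + 1 => SimpleGraph.fromRel (fun u v =>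
      match u, v with
      | Sum.inl _, _ => True
      | Sum.inr (Sum.inl x), Sum.inr (Sum.inl y) => (JGraph a b m).Adj x y
      | Sum.inr (Sum.inr x), Sum.inr (Sum.inr y) => (JGraph a b m).Adj x y
      | _, _ => False)

noncomputable def GwpVert (w p : ℕ) : Type := JVert (w + 1) ⌈deltaF w⌉₊ (p - pW w)
noncomputable def Gwp (w p : ℕ) : SimpleGraph (GwpVert w p) := JGraph _ _ _

noncomputable def GkwpVert (k w p : ℕ) : Type := JVert ((k + 1) * (w + 1)) ⌈deltaK k w⌉₊ (p - pWK k w)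
noncomputable def Gkwp (k w p : ℕ) : SimpleGraph (GkwpVert k w p) := JGraph _ _ _

structure TreeDecomp {V : Type*} {ι : Type*} (G : SimpleGraph V) (T : SimpleGraph ι) where
  isTree : T.IsTree
  bag : ι → Set V
  bag_connected : ∀ v : V, (T.induce {x | v ∈ bag x}).Connected
  bag_edge : ∀ ⦃u v : V⦄, G.Adj u v → ∃ x, u ∈ bag x ∧ v ∈ bag x

def HasTreewidthLE {V : Type*} (G : SimpleGraph V) (k : ℕ) : Prop :=
  ∃ (ι : Type) (T : SimpleGraph ι) (td : TreeDecomp G T), ∀ x, (td.bag x).ncard ≤ k + 1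

lemma q_pos (w : ℕ) : (0:ℝ) < (2/3:ℝ)^w := by positivity

lemma q_le_one (w : ℕ) : (2/3:ℝ)^w ≤ 1 :=
  pow_le_one₀ (by norm_num) (by norm_num)

lemma ratio_ge (w : ℕ) : (3/2:ℝ) ≤ ratio w := by
  have h1 := q_pos w
  have h2 := q_le_one w
  rw [ratio, le_div_iff₀ (by linarith)]
  linarith

lemma ratio_ge_one (w : ℕ) : (1:ℝ) ≤ ratio w := le_trans (by norm_num) (ratio_ge w)

lemma pW_mem (w : ℕ) : betaF w ≤ alphaF w (pW w + 1) := by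
  have hne : {p : ℕ | betaF w ≤ alphaF w (p + 1)}.Nonempty := by
    refine ⟨w + 5, ?_⟩
    have h1 := q_pos w
    have h2 := q_le_one w
    have hr : (3/2:ℝ)^(w+5) ≤ ratio w ^ (w+5) :=
      pow_le_pow_left₀ (by norm_num) (ratio_ge w) _
    have hp32 : (0:ℝ) < (3/2:ℝ)^w := by positivity
    simp only [Set.mem_setOf_eq, betaF, alphaF, Nat.add_sub_cancel]
    have hinv : (1:ℝ)/2 ≤ 1 / (1 + (2/3:ℝ)^w) := by
      apply div_le_div_of_nonneg_left (by norm_num) (by linarith) (by linarith)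
    have hA : (1/2:ℝ) * (3/2)^(w+5) = (3/2)^w * (243/64) := by
      rw [pow_add]; norm_num; ring
    calc 3 * (3/2:ℝ)^w ≤ (3/2:ℝ)^w * (243/64) := by nlinarith
      _ = (1/2) * (3/2:ℝ)^(w+5) := hA.symm
      _ ≤ (1 / (1 + (2/3:ℝ)^w)) * ratio w ^ (w+5) := by
          apply mul_le_mul hinv hr (by positivity) (by positivity)
  exact Nat.sInf_mem hne

theorem statement_3 (w p : ℕ) (hp : pW w + 1 ≤ p) :
    alphaF w p + 3 ≤ gammaF w p := by
  have h1 := q_pos w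
  have h2 := q_le_one w
  have hp1 : 1 ≤ p := le_trans (Nat.le_add_left 1 _) hp
  have key : (3:ℝ) ≤ ratio w ^ (p - 1) := by
    have h3 : (3:ℝ) ≤ betaF w := by
      have : (1:ℝ) ≤ (3/2:ℝ)^w := one_le_pow₀ (by norm_num)
      simp only [betaF]; linarith
    have h4 : betaF w ≤ alphaF w (pW w + 1) := pW_mem w
    have h5 : alphaF w (pW w + 1) ≤ ratio w ^ (pW w) := by
      simp only [alphaF, Nat.add_sub_cancel]
      have : (1:ℝ) / (1 + (2/3:ℝ)^w) ≤ 1 := by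
        rw [div_le_one (by linarith)]; linarith
      nlinarith [pow_pos (lt_of_lt_of_le one_pos (ratio_ge_one w)) (pW w)]
    have h6 : ratio w ^ (pW w) ≤ ratio w ^ (p - 1) :=
      pow_le_pow_right₀ (ratio_ge_one w) (by omega)
    linarith
  have hsplit : gammaF w p = ratio w ^ (p - 1) * ratio w := by
    rw [gammaF, ← pow_succ]
    congr 1
    omega
  have halpha : alphaF w p = ratio w ^ (p - 1) * (1 / (1 + (2/3:ℝ)^w)) := by
    rw [alphaF]; ring
  rw [hsplit, halpha]
  have hthis : ratio w - 1 / (1 + (2/3:ℝ)^w) = 1 := by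
    rw [ratio]
    field_simp
    ring
  have heq : ratio w ^ (p-1) * ratio w -
      ratio w ^ (p-1) * (1 / (1 + (2/3:ℝ)^w)) = ratio w ^ (p-1) := by
    rw [← mul_sub, hthis, mul_one]
  linarith [key]
end

section
/- There exist constants C > 0 and P₀ such that for every integer p ≥ P₀, setting w = ⌈log_{3/2} p⌉, the graph G_{w,p} has at most 5·2^p·p·log_{3/2}(p) + C·2^p·p edges. -/
open SimpleGraph

lemma x_pos (w : ℕ) : (0:ℝ) < (2/3 : ℝ) ^ w := by positivity
lemma x_le_one (w : ℕ) : ((2/3 : ℝ) ^ w) ≤ 1 := pow_le_one₀ (by norm_num) (by norm_num)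

lemma ratio_lb (w : ℕ) : (3/2 : ℝ) ≤ ratio w := by
  have h0 := x_pos w; have h1 := x_le_one w
  rw [ratio, le_div_iff₀ (by linarith)]
  linarith

lemma ratio_ub (w : ℕ) : ratio w ≤ 2 := by
  have h0 := x_pos w
  rw [ratio, div_le_iff₀ (by linarith)]
  linarith

lemma mem5 (w : ℕ) : betaF w ≤ alphaF w (w + 5 + 1) := by
  have h0 := x_pos w; have h1 := x_le_one w
  have hE : (w + 5 + 1) - 1 = w + 5 := by omega
  rw [alphaF, hE, betaF]
  have hy : (0:ℝ) < (3/2:ℝ) ^ w := by positivity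
  have hr : (3/2:ℝ) ^ (w+5) ≤ ratio w ^ (w+5) :=
    pow_le_pow_left₀ (by norm_num) (ratio_lb w) _
  have hhalf : (1/2 : ℝ) ≤ 1 / (1 + (2/3 : ℝ) ^ w) := by
    rw [div_le_div_iff₀ (by norm_num) (by linarith)]
    linarith
  calc 3 * (3/2:ℝ) ^ w ≤ (1/2) * ((3/2:ℝ) ^ (w+5)) := by
        rw [pow_add]; nlinarith
    _ ≤ (1 / (1 + (2/3 : ℝ) ^ w)) * ratio w ^ (w+5) := by
        apply mul_le_mul hhalf hr (by positivity) (by positivity)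

lemma pW_le (w : ℕ) : pW w ≤ w + 5 := Nat.sInf_le (mem5 w)

lemma two_pow_pW (w : ℕ) : betaF w ≤ (2:ℝ) ^ pW w := by
  have h0 := x_pos w
  have hmem := pW_mem w
  rw [alphaF, Nat.add_sub_cancel] at hmem
  have h1 : (1 / (1 + (2/3 : ℝ) ^ w)) ≤ 1 := by
    rw [div_le_one (by linarith)]; linarith
  have hrp : (0:ℝ) ≤ ratio w ^ pW w := by
    have := ratio_lb w; positivity
  have h2 : ratio w ^ pW w ≤ (2:ℝ) ^ pW w :=
    pow_le_pow_left₀ (le_trans (by norm_num) (ratio_lb w)) (ratio_ub w) _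
  nlinarith

def jvertFintype (a b : ℕ) : (m : ℕ) → Fintype (JVert a b m)
  | 0 => inferInstanceAs (Fintype (Fin b))
  | m + 1 =>
    letI := jvertFintype a b m
    inferInstanceAs (Fintype (Fin a ⊕ (JVert a b m ⊕ JVert a b m)))
instance instJVertFintype (a b m : ℕ) : Fintype (JVert a b m) := jvertFintype a b m

lemma edge_base (a b : ℕ) : (JGraph a b 0).edgeSet.ncard ≤ b * b := by
  have h1 : (JGraph a b 0).edgeSet.ncard ≤ (Set.univ : Set (Sym2 (Fin b))).ncard :=
    Set.ncard_le_ncard (Set.subset_univ _) (Set.toFinite _)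
  have h2 : (Set.univ : Set (Sym2 (Fin b))).ncard = Nat.choose (b + 1) 2 := by
    rw [Set.ncard_univ, Nat.card_eq_fintype_card, Sym2.card]
    simp
  have h3 : Nat.choose (b + 1) 2 ≤ b * b := by
    rw [Nat.choose_two_right, Nat.add_sub_cancel]
    have : (b + 1) * b ≤ 2 * (b * b) := by nlinarith
    omega
  omega

lemma jvert_card_succ (a b m : ℕ) :
    Fintype.card (JVert a b (m+1))
      = a + (Fintype.card (JVert a b m) + Fintype.card (JVert a b m)) := by
  have h : Fintype.card (JVert a b (m+1)) = Fintype.card (Fin a ⊕ (JVert a b m ⊕ JVert a b m)) :=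
    Fintype.card_congr (Equiv.refl _)
  rw [h, Fintype.card_sum, Fintype.card_sum, Fintype.card_fin]

lemma jvert_card (a b m : ℕ) :
    Fintype.card (JVert a b m) + a ≤ 2 ^ m * (a + b) := by
  induction m with
  | zero =>
    have h : Fintype.card (JVert a b 0) = Fintype.card (Fin b) := Fintype.card_congr (Equiv.refl _)
    rw [h]; simp only [Fintype.card_fin, pow_zero, one_mul]; omega
  | succ m ih =>
    rw [jvert_card_succ]
    have h2 : 2 ^ (m+1) * (a + b) = 2 * (2 ^ m * (a + b)) := by ring
    rw [h2]
    omega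

lemma edge_rec (a b m : ℕ) :
    (JGraph a b (m+1)).edgeSet.ncard ≤
      a * Fintype.card (JVert a b (m+1)) + 2 * (JGraph a b m).edgeSet.ncard := by
  classical
  set V := JVert a b (m+1)
  set fL : JVert a b m → V := fun x => Sum.inr (Sum.inl x) with hfL
  set fR : JVert a b m → V := fun x => Sum.inr (Sum.inr x) with hfR
  set S1 : Set (Sym2 V) := Set.range (fun iv : Fin a × V => s(Sum.inl iv.1, iv.2)) with hS1
  set S2 : Set (Sym2 V) := Sym2.map fL '' (JGraph a b m).edgeSet with hS2
  set S3 : Set (Sym2 V) := Sym2.map fR '' (JGraph a b m).edgeSet with hS3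
  have hsub : (JGraph a b (m+1)).edgeSet ⊆ S1 ∪ S2 ∪ S3 := by
    intro e he
    induction e with
    | h u v =>
      rw [mem_edgeSet] at he
      have hadj := he
      rw [show JGraph a b (m+1) = SimpleGraph.fromRel (fun u v =>
        match u, v with
        | Sum.inl _, _ => True
        | Sum.inr (Sum.inl x), Sum.inr (Sum.inl y) => (JGraph a b m).Adj x y
        | Sum.inr (Sum.inr x), Sum.inr (Sum.inr y) => (JGraph a b m).Adj x y
        | _, _ => False) from rfl, fromRel_adj] at hadj
      obtain ⟨hne, hrel⟩ := hadj
      match u, v with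
      | Sum.inl i, v =>
        exact Or.inl (Or.inl ⟨(i, v), rfl⟩)
      | Sum.inr u', Sum.inl i =>
        refine Or.inl (Or.inl ⟨(i, Sum.inr u'), ?_⟩)
        exact (Sym2.eq_swap)
      | Sum.inr (Sum.inl x), Sum.inr (Sum.inl y) =>
        have : (JGraph a b m).Adj x y := by
          rcases hrel with h | h
          · exact h
          · exact h.symm
        exact Or.inl (Or.inr ⟨s(x, y), this, rfl⟩)
      | Sum.inr (Sum.inr x), Sum.inr (Sum.inr y) =>
        have : (JGraph a b m).Adj x y := by
          rcases hrel with h | h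
          · exact h
          · exact h.symm
        exact Or.inr ⟨s(x, y), this, rfl⟩
      | Sum.inr (Sum.inl x), Sum.inr (Sum.inr y) => rcases hrel with h | h <;> exact h.elim
      | Sum.inr (Sum.inr x), Sum.inr (Sum.inl y) => rcases hrel with h | h <;> exact h.elim
  have h1 : S1.ncard ≤ a * Fintype.card V := by
    have himg : S1 = (fun iv : Fin a × V => s(Sum.inl iv.1, iv.2)) '' Set.univ := by
      rw [Set.image_univ]; exact hS1
    calc S1.ncard ≤ (Set.univ : Set (Fin a × V)).ncard := by
          rw [himg]; exact Set.ncard_image_le (Set.toFinite _)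
      _ = a * Fintype.card V := by
          rw [Set.ncard_univ]; simp [Nat.card_eq_fintype_card]
  have h2 : S2.ncard ≤ (JGraph a b m).edgeSet.ncard := Set.ncard_image_le (Set.toFinite _)
  have h3 : S3.ncard ≤ (JGraph a b m).edgeSet.ncard := Set.ncard_image_le (Set.toFinite _)
  calc (JGraph a b (m+1)).edgeSet.ncard ≤ (S1 ∪ S2 ∪ S3).ncard :=
        Set.ncard_le_ncard hsub (Set.toFinite _)
    _ ≤ (S1 ∪ S2).ncard + S3.ncard := Set.ncard_union_le _ _
    _ ≤ S1.ncard + S2.ncard + S3.ncard := by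
        have := Set.ncard_union_le S1 S2
        omega
    _ ≤ a * Fintype.card V + 2 * (JGraph a b m).edgeSet.ncard := by omega

lemma edge_bound (a b m : ℕ) :
    (JGraph a b m).edgeSet.ncard ≤ 2 ^ m * (b * b + m * (a * (a + b))) := by
  induction m with
  | zero => simpa using edge_base a b
  | succ m ih =>
    have h1 := edge_rec a b m
    have h2 : Fintype.card (JVert a b (m+1)) ≤ 2 ^ (m+1) * (a + b) :=
      le_trans (Nat.le_add_right _ _) (jvert_card a b (m+1))
    calc (JGraph a b (m+1)).edgeSet.ncard
        ≤ a * Fintype.card (JVert a b (m+1)) + 2 * (JGraph a b m).edgeSet.ncard := h1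
      _ ≤ a * (2 ^ (m+1) * (a + b)) + 2 * (2 ^ m * (b * b + m * (a * (a + b)))) := by
          gcongr
      _ = 2 ^ (m+1) * (b * b + (m+1) * (a * (a + b))) := by ring


attribute [irreducible] pW

theorem aux_main (p : ℕ) (hp : 64 ≤ p)
    (n : ℕ)
    (hn : n ≤ 2 ^ (p - pW ⌈Real.logb (3/2) p⌉₊) *
      (⌈deltaF ⌈Real.logb (3/2) p⌉₊⌉₊ * ⌈deltaF ⌈Real.logb (3/2) p⌉₊⌉₊ +
        (p - pW ⌈Real.logb (3/2) p⌉₊) *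
          ((⌈Real.logb (3/2) p⌉₊ + 1) * ((⌈Real.logb (3/2) p⌉₊ + 1) + ⌈deltaF ⌈Real.logb (3/2) p⌉₊⌉₊)))) :
    (n : ℝ) ≤ 5 * 2 ^ p * p * Real.logb (3/2) p + 200 * 2 ^ p * p := by
  set L : ℝ := Real.logb (3/2) p with hLdef
  set w : ℕ := ⌈L⌉₊ with hwdef
  set b : ℕ := ⌈deltaF w⌉₊ with hbdef
  set m : ℕ := p - pW w with hmdef
  have hnR : (n:ℝ) ≤ (2:ℝ) ^ m * ((b:ℝ) * (b:ℝ) + (m:ℝ) * (((w:ℝ)+1) * (((w:ℝ)+1) + (b:ℝ)))) := by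
    exact_mod_cast hn
  have hm_le_nat : m ≤ p := by omega
  clear hn
  have hp0 : (0:ℝ) < p := by
    have : (0:ℕ) < p := by omega
    exact_mod_cast this
  have hp64 : (64:ℝ) ≤ p := by exact_mod_cast hp
  have hp1 : (1:ℝ) ≤ p := by linarith
  have hL0 : 0 ≤ L := Real.logb_nonneg (by norm_num) hp1
  have hlogp0 : 0 ≤ Real.log p := Real.log_nonneg hp1
  have hlog32 : (1/3 : ℝ) ≤ Real.log (3/2) := by
    have h := Real.log_le_sub_one_of_pos (show (0:ℝ) < 2/3 by norm_num)
    have hinv : Real.log (3/2 : ℝ) = - Real.log (2/3 : ℝ) := by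
      rw [show (3/2 : ℝ) = (2/3 : ℝ)⁻¹ by norm_num, Real.log_inv]
    linarith
  have hsqrt_pos : 0 < Real.sqrt p := Real.sqrt_pos.2 hp0
  have hsq : Real.sqrt p ≤ p / 8 := by
    have h1 : (p:ℝ) ≤ (p/8)^2 := by nlinarith
    have := Real.sqrt_le_sqrt h1
    rwa [Real.sqrt_sq (by linarith)] at this
  have hlogp : Real.log p ≤ 2 * Real.sqrt p := by
    have h1 : Real.log (Real.sqrt p) = Real.log p / 2 := Real.log_sqrt hp0.le
    have h2 : Real.log (Real.sqrt p) ≤ Real.sqrt p - 1 :=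
      Real.log_le_sub_one_of_pos hsqrt_pos
    linarith
  have hL3 : L ≤ 3 * Real.log p := by
    rw [hLdef, Real.logb, div_le_iff₀ (by linarith)]
    nlinarith
  have hL6 : L ≤ 6 * Real.sqrt p := by linarith
  have hL2 : L ^ 2 ≤ 36 * p := by
    have hs := Real.sq_sqrt hp0.le
    nlinarith
  have hLle : L ≤ (3/4) * p := by nlinarith
  have hLw : L ≤ w := Nat.le_ceil L
  have hwL : (w:ℝ) ≤ L + 1 := (Nat.ceil_lt_add_one hL0).le
  have hplog : (3/2:ℝ) ^ L = p := Real.rpow_logb (by norm_num) (by norm_num) hp0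
  have hpow_ge : (p:ℝ) ≤ (3/2:ℝ) ^ w := by
    have h1 : (3/2:ℝ) ^ L ≤ (3/2:ℝ) ^ (w:ℝ) :=
      Real.rpow_le_rpow_of_exponent_le (by norm_num) hLw
    rwa [hplog, Real.rpow_natCast] at h1
  have hpow_le : (3/2:ℝ) ^ w ≤ (3/2) * p := by
    have h1 : (3/2:ℝ) ^ (w:ℝ) ≤ (3/2:ℝ) ^ (L + 1) :=
      Real.rpow_le_rpow_of_exponent_le (by norm_num) hwL
    rw [Real.rpow_add (by norm_num), hplog, Real.rpow_one, Real.rpow_natCast] at h1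
    linarith
  have hpow_pos : (0:ℝ) < (3/2:ℝ) ^ w := by positivity
  have hx1 : ((2/3 : ℝ) ^ w) ≤ 1 := x_le_one w
  have hx0 : (0:ℝ) < (2/3 : ℝ) ^ w := by positivity
  have hdelta_nonneg : 0 ≤ deltaF w := by
    rw [deltaF, betaF]; positivity
  have hb14 : (b:ℝ) ≤ 14 * p := by
    have h1 : (b:ℝ) < deltaF w + 1 := Nat.ceil_lt_add_one hdelta_nonneg
    have h2 : deltaF w ≤ 9 * ((3/2:ℝ) ^ w) := by
      rw [deltaF, betaF]
      nlinarith only [hx1, hx0, hpow_pos]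
    nlinarith only [h1, h2, hpow_le, hp64]
  have hpW_le_p : pW w ≤ p := by
    have h1 : (pW w : ℝ) ≤ (w:ℝ) + 5 := by exact_mod_cast pW_le w
    have h2 : (pW w : ℝ) ≤ (p:ℝ) := by linarith only [h1, hwL, hL6, hsq, hp64]
    exact_mod_cast h2
  have h3p2pW : (3:ℝ) * p ≤ 2 ^ pW w := by
    have h1 := two_pow_pW w
    rw [betaF] at h1
    linarith only [h1, hpow_ge]
  have h2m : (2:ℝ) ^ m ≤ 2 ^ p / (3 * p) := by
    have hmp : m + pW w = p := by omega
    have heq : (2:ℝ) ^ m * 2 ^ pW w = 2 ^ p := by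
      rw [← pow_add, hmp]
    have h2pWpos : (0:ℝ) < 2 ^ pW w := by positivity
    rw [le_div_iff₀ (by positivity)]
    calc (2:ℝ) ^ m * (3 * p) ≤ (2:ℝ) ^ m * 2 ^ pW w := by
          apply mul_le_mul_of_nonneg_left h3p2pW (by positivity)
      _ = 2 ^ p := heq
  have hm_le : (m:ℝ) ≤ p := by exact_mod_cast hm_le_nat
  have ha : ((w:ℝ)+1) ≤ L + 2 := by linarith
  have hinner : (b:ℝ) * (b:ℝ) + (m:ℝ) * (((w:ℝ)+1) * (((w:ℝ)+1) + (b:ℝ)))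
      ≤ (14*p) * (14*p) + (p:ℝ) * ((L+2) * ((L+2) + 14*p)) := by
    have hb0 : (0:ℝ) ≤ b := Nat.cast_nonneg b
    have hm0 : (0:ℝ) ≤ m := Nat.cast_nonneg m
    have hw0 : (0:ℝ) ≤ (w:ℝ) + 1 := by positivity
    gcongr <;> linarith
  have step1 : (n:ℝ) ≤ (2 ^ p / (3 * p)) * ((14*p) * (14*p) + (p:ℝ) * ((L+2) * ((L+2) + 14*p))) := by
    refine le_trans hnR ?_
    apply mul_le_mul h2m hinner ?_ (by positivity)
    have hb0 : (0:ℝ) ≤ b := Nat.cast_nonneg b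
    have hm0 : (0:ℝ) ≤ m := Nat.cast_nonneg m
    have hw0 : (0:ℝ) ≤ (w:ℝ) + 1 := by positivity
    positivity
  have key : 196 * (p:ℝ) + (L+2) * ((L+2) + 14*p) ≤ 15 * p * L + 600 * p := by
    nlinarith only [sq_nonneg (L - 6), mul_nonneg hL0 hp0.le, hL2, hL0, hp64]
  have step2 : (2 ^ p / (3 * (p:ℝ))) * ((14*p) * (14*p) + (p:ℝ) * ((L+2) * ((L+2) + 14*p)))
      ≤ 5 * 2 ^ p * p * L + 200 * 2 ^ p * p := by
    rw [div_mul_eq_mul_div, div_le_iff₀ (by positivity)]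
    have h2p0 : (0:ℝ) ≤ 2 ^ p * p := by positivity
    nlinarith only [mul_le_mul_of_nonneg_left key h2p0]
  exact le_trans step1 step2


theorem statement_7 : ∃ C : ℝ, 0 < C ∧ ∃ P₀ : ℕ, ∀ p : ℕ, P₀ ≤ p →
    (((Gwp ⌈Real.logb (3/2) p⌉₊ p).edgeSet.ncard : ℝ))
      ≤ 5 * 2 ^ p * p * Real.logb (3/2) p + C * 2 ^ p * p := by
  refine ⟨200, by norm_num, 64, fun p hp => ?_⟩
  have hn : (Gwp ⌈Real.logb (3/2) p⌉₊ p).edgeSet.ncard ≤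
      2 ^ (p - pW ⌈Real.logb (3/2) p⌉₊) *
        (⌈deltaF ⌈Real.logb (3/2) p⌉₊⌉₊ * ⌈deltaF ⌈Real.logb (3/2) p⌉₊⌉₊ +
          (p - pW ⌈Real.logb (3/2) p⌉₊) *
            ((⌈Real.logb (3/2) p⌉₊ + 1) * ((⌈Real.logb (3/2) p⌉₊ + 1) + ⌈deltaF ⌈Real.logb (3/2) p⌉₊⌉₊))) :=
    edge_bound _ _ _
  exact aux_main p hp _ hn
end
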